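/- Let s be a sesquilinear form on a finitely generated right Q-module V, with associated even skew-hermitian form h_s. Let d, e be natural numbers, v₀, …, v_d ∈ V and w₀, …, w_e ∈ V. Set b̃ = Σ_{i=0}^{d} Σ_{i'=0}^{e} a(tⁱ·ε, h_s(v_i, w_{i'})·t^{i'}·ε) and q̃ = q̃(v₀,…,v_d). Then b̃ and q̃ lie in 𝓕, deg b̃ ≤ d + e + 1, and deg q̃ ≤ 2d + 1. Moreover, if deg b̃ < d + e + 1 then h_s(v_d, w_e) ∈ K, and if deg q̃ < 2d + 1 then s(v_d, v_d) ∈ K. -/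

import Mathlib

open scoped TensorProduct

/-- `f` is a Laurent polynomial: a finite sum `Σ y_z · t^z` with `y_z ∈ K`. -/
def IsLaurent {K : Type} [Field K] (f : RatFunc K) : Prop :=
  ∃ c : ℤ →₀ K, f = c.sum fun z y => algebraMap K (RatFunc K) y * RatFunc.X ^ z

/-- `f` is a Laurent polynomial of degree at most `n` (degree = max |z| over nonzero
coefficients; `deg 0 = -∞`). -/
def LaurentDegLE {K : Type} [Field K] (f : RatFunc K) (n : ℕ) : Prop :=
  ∃ c : ℤ →₀ K, (∀ z : ℤ, c z ≠ 0 → |z| ≤ (n : ℤ)) ∧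
    f = c.sum fun z y => algebraMap K (RatFunc K) y * RatFunc.X ^ z

/-- The value `a(f·ε, g·ε) = u·(σ(f)·g − f·σ(g))` of the alternating form `a` on `I`,
expressed through the unique representations `f·ε`, `g·ε` of its arguments. -/
noncomputable def aForm {K : Type} [Field K] (σ : RatFunc K ≃+* RatFunc K) (u : K)
    (f g : RatFunc K) : RatFunc K :=
  algebraMap K (RatFunc K) u * (σ f * g - f * σ g)

/-!
Write `x ∈ Q` as `x₁ + x₂ j` with `x₁, x₂ ∈ K`. Since `j·ε = σ(t)·ε` in `Q_F`, one gets
`x·tⁱ·ε = (x₁ tⁱ + x₂ σ(t)^(i+1))·ε`, so each summand `a(tⁱε, x·t^{i'}ε)` is an explicit Laurent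
polynomial supported in degrees `|z| ≤ i + i' + 1`, fixed by `σ` (as is every value of `a`), whose
coefficient of `t^(i+i'+1)` is `-u·ι(x₂)`. In `b̃` only the summand `(i, i') = (d, e)` reaches the
degree `d + e + 1`, and in `q̃` only the diagonal summand `(d, d)` reaches `2d + 1`; so the top
coefficient vanishes exactly when the `j`-component of `h_s(v_d, w_e)`, resp. `s(v_d, v_d)`, does.
Coefficients of elements of `K(t)` are read off in the Laurent series field `K((t))`.
-/

open RatFunc
open scoped LaurentSeries

section Laurent

variable {K : Type*} [Field K]

variable (K) in
noncomputable def laurentSpan (n : ℕ) : Submodule K (RatFunc K) :=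
  Submodule.span K ((fun z : ℤ => (X : RatFunc K) ^ z) '' {z | |z| ≤ n})

theorem algebraMap_laurentSeries_algebraMap (y : K) :
    algebraMap (RatFunc K) K⸨X⸩ (algebraMap K (RatFunc K) y) = HahnSeries.C y := by
  rw [algebraMap_eq_C, ← algebraMap_C, ← IsScalarTower.algebraMap_apply]
  simp only [Polynomial.algebraMap_hahnSeries_apply, Polynomial.coe_C, HahnSeries.ofPowerSeries_C]

variable (K) in
noncomputable def laurentCoeff (w : ℤ) : RatFunc K →ₗ[K] K where
  toFun f := (algebraMap (RatFunc K) K⸨X⸩ f).coeff w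
  map_add' f g := by simp only [map_add, HahnSeries.coeff_add]
  map_smul' a f := by
    simp only [Algebra.smul_def, map_mul, algebraMap_laurentSeries_algebraMap,
      HahnSeries.C_mul_eq_smul, HahnSeries.coeff_smul, RingHom.id_apply]

theorem laurentDegLE_iff_mem_laurentSpan {K : Type} [Field K] {f : RatFunc K} {n : ℕ} :
    LaurentDegLE f n ↔ f ∈ laurentSpan K n := by
  simp only [laurentSpan, Finsupp.mem_span_image_iff_linearCombination, Finsupp.mem_supported,
    Finsupp.linearCombination_apply, Algebra.smul_def, LaurentDegLE, Set.subset_def,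
    Finset.mem_coe, Finsupp.mem_support_iff, Set.mem_ofPred_eq, eq_comm]

theorem LaurentDegLE.isLaurent {K : Type} [Field K] {f : RatFunc K} {n : ℕ}
    (h : LaurentDegLE f n) : IsLaurent f :=
  let ⟨c, _, hc⟩ := h
  ⟨c, hc⟩

theorem laurentSpan_mono {m n : ℕ} (h : m ≤ n) : laurentSpan K m ≤ laurentSpan K n :=
  Submodule.span_mono <| Set.image_mono fun z (hz : |z| ≤ m) => hz.trans (by exact_mod_cast h)

theorem C_mul_X_zpow_mem_laurentSpan (y : K) {z : ℤ} {n : ℕ} (hz : |z| ≤ n) :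
    algebraMap K (RatFunc K) y * X ^ z ∈ laurentSpan K n := by
  rw [← Algebra.smul_def]
  exact Submodule.smul_mem _ _ (Submodule.subset_span ⟨z, hz, rfl⟩)

theorem laurentCoeff_C_mul_X_zpow (y : K) (z w : ℤ) :
    laurentCoeff K w (algebraMap K (RatFunc K) y * X ^ z) = if w = z then y else 0 := by
  simp only [laurentCoeff, LinearMap.coe_mk, AddHom.coe_mk, map_mul, map_zpow₀, coe_X,
    ← single_zpow, algebraMap_laurentSeries_algebraMap, HahnSeries.C_mul_eq_smul,
    HahnSeries.coeff_smul, HahnSeries.coeff_single, smul_eq_mul, mul_ite, mul_one, mul_zero]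

theorem laurentCoeff_eq_zero_of_mem {f : RatFunc K} {n : ℕ} (hf : f ∈ laurentSpan K n) {w : ℤ}
    (hw : n < |w|) : laurentCoeff K w f = 0 := by
  refine (Submodule.span_le (p := LinearMap.ker (laurentCoeff K w))).mpr ?_ hf
  rintro _ ⟨z, hz : |z| ≤ n, rfl⟩
  have hwz : w ≠ z := by
    rintro rfl
    exact hz.not_gt hw
  simpa [hwz] using laurentCoeff_C_mul_X_zpow (1 : K) z w

theorem laurentCoeff_sum_eq_of_mem {ι : Type*} [Fintype ι] {f : ι → RatFunc K} {n : ℕ} (i₀ : ι)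
    (hf : ∀ i ≠ i₀, f i ∈ laurentSpan K n) :
    laurentCoeff K (n + 1 : ℕ) (∑ i, f i) = laurentCoeff K (n + 1 : ℕ) (f i₀) := by
  rw [map_sum]
  exact Fintype.sum_eq_single i₀ fun i hi =>
    laurentCoeff_eq_zero_of_mem (hf i hi) (by rw [Nat.abs_cast]; omega)

end Laurent

theorem involutive_of_map_X {K : Type*} [Field K] {σ : RatFunc K →+* RatFunc K} {ι : K → K}
    (hι : Function.Involutive ι)
    (hσK : ∀ x, σ (algebraMap K (RatFunc K) x) = algebraMap K (RatFunc K) (ι x))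
    {β : K} (hβ : β ≠ 0) (hιβ : ι β = β) (hσX : σ X = algebraMap K (RatFunc K) β * X⁻¹) :
    Function.Involutive σ := by
  have hσσ : σ.comp σ = RingHom.id _ := by
    refine IsLocalization.ringHom_ext (nonZeroDivisors (Polynomial K))
      (Polynomial.ringHom_ext (fun a => ?_) ?_)
    · simp only [RingHom.comp_apply, algebraMap_C, ← algebraMap_eq_C, hσK, hι a, RingHom.id_apply]
    · have hβ' : algebraMap K (RatFunc K) β ≠ 0 := (map_ne_zero _).mpr hβ
      simp only [RingHom.comp_apply, algebraMap_X, hσX, map_mul, map_inv₀, hσK, hιβ,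
        RingHom.id_apply]
      field_simp
  exact RingHom.congr_fun hσσ

section AForm

variable {K : Type} [Field K] {σ : RatFunc K ≃+* RatFunc K}

theorem aForm_fixed (hσ : Function.Involutive σ) {u : K}
    (hu : σ (algebraMap K (RatFunc K) u) = -algebraMap K (RatFunc K) u) (f g : RatFunc K) :
    σ (aForm σ u f g) = aForm σ u f g := by
  simp only [aForm, map_mul, map_sub, hσ f, hσ g, hu]
  ring

variable {ι : K → K} {β : K}

theorem aForm_X_pow
    (hσK : ∀ x, σ (algebraMap K (RatFunc K) x) = algebraMap K (RatFunc K) (ι x))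
    (hβ : β ≠ 0) (hιβ : ι β = β) (hσX : σ X = algebraMap K (RatFunc K) β * X⁻¹)
    (u x₁ x₂ : K) (i i' : ℕ) :
    aForm σ u (X ^ i) (algebraMap K (RatFunc K) x₁ * X ^ i' +
        algebraMap K (RatFunc K) x₂ * (algebraMap K (RatFunc K) β * X⁻¹) ^ (i' + 1)) =
      algebraMap K (RatFunc K) (u * x₁ * β ^ i) * X ^ ((i' : ℤ) - i) +
      algebraMap K (RatFunc K) (u * x₂ * β ^ (i + i' + 1)) * X ^ (-((i + i' + 1 : ℕ) : ℤ)) +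
      algebraMap K (RatFunc K) (-(u * ι x₁ * β ^ i')) * X ^ ((i : ℤ) - i') +
      algebraMap K (RatFunc K) (-(u * ι x₂)) * X ^ ((i + i' + 1 : ℕ) : ℤ) := by
  have hβ' : algebraMap K (RatFunc K) β ≠ 0 := (map_ne_zero _).mpr hβ
  have hσY : σ (algebraMap K (RatFunc K) β * X⁻¹) = X := by
    rw [map_mul, map_inv₀, hσK, hιβ, hσX]
    field_simp
  simp only [aForm, map_add, map_mul, map_pow, hσK, hσX, hσY, map_neg,
    zpow_sub₀ (X_ne_zero (K := K)), zpow_neg, zpow_natCast]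
  field_simp
  ring

theorem aForm_X_pow_mem_laurentSpan
    (hσK : ∀ x, σ (algebraMap K (RatFunc K) x) = algebraMap K (RatFunc K) (ι x))
    (hβ : β ≠ 0) (hιβ : ι β = β) (hσX : σ X = algebraMap K (RatFunc K) β * X⁻¹)
    (u x₁ x₂ : K) (i i' : ℕ) :
    aForm σ u (X ^ i) (algebraMap K (RatFunc K) x₁ * X ^ i' +
        algebraMap K (RatFunc K) x₂ * (algebraMap K (RatFunc K) β * X⁻¹) ^ (i' + 1)) ∈
      laurentSpan K (i + i' + 1) := by
  rw [aForm_X_pow hσK hβ hιβ hσX]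
  refine add_mem (add_mem (add_mem ?_ ?_) ?_) ?_ <;>
    exact C_mul_X_zpow_mem_laurentSpan _ (abs_le.mpr ⟨by omega, by omega⟩)

theorem laurentCoeff_aForm_X_pow
    (hσK : ∀ x, σ (algebraMap K (RatFunc K) x) = algebraMap K (RatFunc K) (ι x))
    (hβ : β ≠ 0) (hιβ : ι β = β) (hσX : σ X = algebraMap K (RatFunc K) β * X⁻¹)
    (u x₁ x₂ : K) (i i' : ℕ) :
    laurentCoeff K (i + i' + 1 : ℕ) (aForm σ u (X ^ i) (algebraMap K (RatFunc K) x₁ * X ^ i' +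
        algebraMap K (RatFunc K) x₂ * (algebraMap K (RatFunc K) β * X⁻¹) ^ (i' + 1))) =
      -(u * ι x₂) := by
  simp only [aForm_X_pow hσK hβ hιβ hσX, map_add, laurentCoeff_C_mul_X_zpow]
  split_ifs <;> first | omega | simp

end AForm

section CrossedProduct

variable {L A : Type*} [CommRing L] [Ring A] {σ : L → L} {ψ : L →+* A} {J : A}

theorem map_mul_one_add_mul_map (hJ : ∀ f, J * ψ f = ψ (σ f) * J) (f τ : L) :
    ψ f * (1 + J * ψ τ) = ψ f + ψ (f * σ τ) * J := by
  rw [mul_add, mul_one, ← mul_assoc, mul_assoc, hJ, ← mul_assoc, ← map_mul]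

theorem eq_of_map_mul_one_add_mul_map_eq (hJ : ∀ f, J * ψ f = ψ (σ f) * J)
    (hdec : ∀ q : A, ∃! p : L × L, q = ψ p.1 + ψ p.2 * J)
    {f g τ : L} (h : ψ f * (1 + J * ψ τ) = ψ g * (1 + J * ψ τ)) : f = g := by
  rw [map_mul_one_add_mul_map hJ, map_mul_one_add_mul_map hJ] at h
  obtain ⟨_, -, huniq⟩ := hdec (ψ g + ψ (g * σ τ) * J)
  exact congrArg Prod.fst ((huniq (f, f * σ τ) h.symm).trans (huniq (g, g * σ τ) rfl).symm)

theorem add_mul_mul_map_mul_one_add_mul_map (hJ : ∀ f, J * ψ f = ψ (σ f) * J) {c τ : L}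
    (hJ2 : J * J = ψ c) (hτ : c * τ * σ τ = 1) (a a' g : L) :
    (ψ a + ψ a' * J) * (ψ g * (1 + J * ψ τ)) =
      ψ (a * g + a' * σ g * (c * τ)) * (1 + J * ψ τ) := by
  have hJε : J * (1 + J * ψ τ) = ψ (c * τ) * (1 + J * ψ τ) := by
    rw [map_mul_one_add_mul_map hJ, hτ, map_one, one_mul, mul_add, mul_one, ← mul_assoc, hJ2,
      ← map_mul, add_comm]
  generalize 1 + J * ψ τ = ε at hJε ⊢
  rw [add_mul, mul_assoc, ← mul_assoc J, hJ, mul_assoc, hJε, ← mul_assoc, ← mul_assoc,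
    ← mul_assoc, ← map_mul, ← map_mul, ← map_mul, ← add_mul, ← map_add]

end CrossedProduct

theorem eq_of_mul_X_pow_mul_one_add_eq {K A : Type*} [Field K] [Ring A]
    {σ : RatFunc K ≃+* RatFunc K} {ψ : RatFunc K →+* A} {J : A} (hJ : ∀ f, J * ψ f = ψ (σ f) * J)
    (hdec : ∀ q : A, ∃! p : RatFunc K × RatFunc K, q = ψ p.1 + ψ p.2 * J) {β : K} (hβ : β ≠ 0)
    (hJ2 : J * J = ψ (algebraMap K (RatFunc K) β))
    (hσX : σ X = algebraMap K (RatFunc K) β * X⁻¹) {x₁ x₂ : K} {i : ℕ} {f : RatFunc K}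
    (h : (ψ (algebraMap K (RatFunc K) x₁) + ψ (algebraMap K (RatFunc K) x₂) * J) *
      (ψ (X ^ i) * (1 + J * ψ X⁻¹)) = ψ f * (1 + J * ψ X⁻¹)) :
    f = algebraMap K (RatFunc K) x₁ * X ^ i +
      algebraMap K (RatFunc K) x₂ * (algebraMap K (RatFunc K) β * X⁻¹) ^ (i + 1) := by
  have hτ : algebraMap K (RatFunc K) β * X⁻¹ * σ X⁻¹ = 1 := by
    rw [map_inv₀, hσX,
      mul_inv_cancel₀ (mul_ne_zero ((map_ne_zero _).mpr hβ) (inv_ne_zero X_ne_zero))]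
  refine (eq_of_map_mul_one_add_mul_map_eq hJ hdec (τ := X⁻¹) ?_).symm
  rw [← h, add_mul_mul_map_mul_one_add_mul_map hJ hJ2 hτ, map_pow, hσX, pow_succ, mul_assoc]

section Sums

variable {K : Type} [Field K]

theorem laurentDegLE_of_eq_sum_sum {d e : ℕ} {f : RatFunc K}
    {F : Fin (d + 1) → Fin (e + 1) → RatFunc K} (hf : f = ∑ i, ∑ i', F i i')
    (hF : ∀ (i : Fin (d + 1)) (i' : Fin (e + 1)), F i i' ∈ laurentSpan K (i + i' + 1)) :
    LaurentDegLE f (d + e + 1) ∧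
      (LaurentDegLE f (d + e) →
        laurentCoeff K (d + e + 1 : ℕ) (F (Fin.last d) (Fin.last e)) = 0) := by
  subst hf
  refine ⟨laurentDegLE_iff_mem_laurentSpan.mpr <| Submodule.sum_mem _ fun i _ =>
    Submodule.sum_mem _ fun i' _ => laurentSpan_mono (by omega) (hF i i'), fun h => ?_⟩
  have htop := laurentCoeff_eq_zero_of_mem (laurentDegLE_iff_mem_laurentSpan.mp h)
    (w := (d + e + 1 : ℕ)) (by rw [Nat.abs_cast]; omega)
  rwa [← Fintype.sum_prod_type', laurentCoeff_sum_eq_of_mem (Fin.last d, Fin.last e)] at htop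
  rintro ⟨i, i'⟩ hii'
  refine laurentSpan_mono ?_ (hF i i')
  simp only [ne_eq, Prod.mk.injEq, Fin.ext_iff, Fin.val_last] at hii'
  omega

theorem laurentDegLE_of_eq_sum_add_sum_sum_ite {d : ℕ} {f : RatFunc K}
    {D : Fin (d + 1) → RatFunc K} {O : Fin (d + 1) → Fin (d + 1) → RatFunc K}
    (hf : f = (∑ i, D i) + ∑ i : Fin (d + 1), ∑ i' : Fin (d + 1),
      if (i : ℕ) < i' then O i i' else 0)
    (hD : ∀ i : Fin (d + 1), D i ∈ laurentSpan K (i + i + 1))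
    (hO : ∀ i i' : Fin (d + 1), O i i' ∈ laurentSpan K (i + i' + 1)) :
    LaurentDegLE f (2 * d + 1) ∧
      (LaurentDegLE f (2 * d) → laurentCoeff K (d + d + 1 : ℕ) (D (Fin.last d)) = 0) := by
  have hoff : (∑ i : Fin (d + 1), ∑ i' : Fin (d + 1), if (i : ℕ) < i' then O i i' else 0) ∈
      laurentSpan K (2 * d) := by
    refine Submodule.sum_mem _ fun i _ => Submodule.sum_mem _ fun i' _ => ?_
    split_ifs with hii'
    · exact laurentSpan_mono (by omega) (hO i i')
    · exact zero_mem _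
  subst hf
  refine ⟨laurentDegLE_iff_mem_laurentSpan.mpr <| add_mem (Submodule.sum_mem _ fun i _ =>
    laurentSpan_mono (by omega) (hD i)) (laurentSpan_mono (by omega) hoff), fun h => ?_⟩
  have htop := laurentCoeff_eq_zero_of_mem (laurentDegLE_iff_mem_laurentSpan.mp h)
    (w := (d + d + 1 : ℕ)) (by rw [Nat.abs_cast]; omega)
  rwa [map_add, laurentCoeff_eq_zero_of_mem hoff (by rw [Nat.abs_cast]; omega), add_zero,
    laurentCoeff_sum_eq_of_mem (Fin.last d)] at htop
  intro i hi
  refine laurentSpan_mono ?_ (hD i)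
  rw [ne_eq, Fin.ext_iff, Fin.val_last] at hi
  omega

end Sums

theorem degree_bounds_for_btilde_qtilde_general
    -- k is a field, K/k a degree-2 Galois extension with nontrivial automorphism ι,
    -- b a nonzero element of k
    (k K : Type) [Field k] [Field K] [Algebra k K]
    (ι : K ≃ₐ[k] K)
    (hι2 : ∀ x : K, ι (ι x) = x)
    (b : k) (hb : b ≠ 0)
    -- Q = (K, ι, b) is the crossed-product quaternion k-algebra, a division ring,
    -- containing K via φ, with j·j = b, j·x = ι(x)·j, and Q = K ⊕ K·j
    (Q : Type) [DivisionRing Q] [Algebra k Q]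
    (φ : K →ₐ[k] Q) (j : Q)
    (hQdec : ∀ q : Q, ∃! p : K × K, q = φ p.1 + φ p.2 * j)
    -- the canonical involution of Q
    (conj : Q → Q)
    -- σ is the automorphism of K(t) acting as ι on K with σ(t) = b·t⁻¹
    (σ : RatFunc K ≃+* RatFunc K)
    (hσK : ∀ x : K, σ (algebraMap K (RatFunc K) x) = algebraMap K (RatFunc K) (ι x))
    (hσt : σ RatFunc.X = algebraMap K (RatFunc K) (algebraMap k K b) * RatFunc.X⁻¹)
    -- Q_F = Q ⊗_k F, identified with K(t) ⊕ K(t)·j : it contains K(t) via ψ and an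
    -- element J (the image of j) with J·J = b, J·ψ(f) = ψ(σ f)·J, Q_F = ψ(K(t)) ⊕ ψ(K(t))·J,
    -- and Q embeds via φ' compatibly with φ and j
    (QF : Type) [Ring QF]
    (ψ : RatFunc K →+* QF) (J : QF)
    (hJ2 : J * J = ψ (algebraMap K (RatFunc K) (algebraMap k K b)))
    (hJf : ∀ f : RatFunc K, J * ψ f = ψ (σ f) * J)
    (hQFdec : ∀ q : QF, ∃! p : RatFunc K × RatFunc K, q = ψ p.1 + ψ p.2 * J)
    (φ' : Q →+* QF)
    (hφ'K : ∀ x : K, φ' (φ x) = ψ (algebraMap K (RatFunc K) x))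
    (hφ'j : φ' j = J)
    -- u is a nonzero element of K with ι(u) = -u
    (u : K) (hu : u ≠ 0) (hιu : ι u = -u)
    -- V is a finitely generated right Q-module and s a sesquilinear form on V
    (V : Type)
    (s : V → V → Q)
    -- r x i is the unique element of K(t) with x·tⁱ·ε = (r x i)·ε
    (r : Q → ℕ → RatFunc K)
    (hr : ∀ (x : Q) (i : ℕ),
      φ' x * (ψ (RatFunc.X ^ i) * (1 + J * ψ RatFunc.X⁻¹)) =
        ψ (r x i) * (1 + J * ψ RatFunc.X⁻¹))
    (d e : ℕ) (v : Fin (d + 1) → V) (w : Fin (e + 1) → V)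
    (btil qtil : RatFunc K)
    (hbtil : btil = ∑ i : Fin (d + 1), ∑ i' : Fin (e + 1),
      aForm σ u (RatFunc.X ^ (i : ℕ))
        (r (s (v i) (w i') - conj (s (w i') (v i))) (i' : ℕ)))
    (hqtil : qtil = (∑ i : Fin (d + 1), aForm σ u (RatFunc.X ^ (i : ℕ)) (r (s (v i) (v i)) (i : ℕ))) +
      ∑ i : Fin (d + 1), ∑ i' : Fin (d + 1),
        if (i : ℕ) < (i' : ℕ) then
          aForm σ u (RatFunc.X ^ (i : ℕ))
            (r (s (v i) (v i') - conj (s (v i') (v i))) (i' : ℕ))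
        else 0) :
    -- b̃ and q̃ lie in 𝓕 ...
    (IsLaurent btil ∧ σ btil = btil) ∧ (IsLaurent qtil ∧ σ qtil = qtil) ∧
    -- ... deg b̃ ≤ d+e+1 and deg q̃ ≤ 2d+1 ...
    LaurentDegLE btil (d + e + 1) ∧ LaurentDegLE qtil (2 * d + 1) ∧
    -- ... if deg b̃ < d+e+1 then h_s(v_d, w_e) ∈ K ...
    (LaurentDegLE btil (d + e) →
      ∃ y : K, s (v (Fin.last d)) (w (Fin.last e)) -
        conj (s (w (Fin.last e)) (v (Fin.last d))) = φ y) ∧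
    -- ... and if deg q̃ < 2d+1 then s(v_d, v_d) ∈ K
    (LaurentDegLE qtil (2 * d) → ∃ y : K, s (v (Fin.last d)) (v (Fin.last d)) = φ y) := by
  have hβ : algebraMap k K b ≠ 0 := (map_ne_zero_iff _ (algebraMap k K).injective).mpr hb
  have hσ : Function.Involutive σ :=
    involutive_of_map_X (σ := σ.toRingHom) hι2 hσK hβ (ι.commutes b) hσt
  choose p hp using fun x => (hQdec x).exists
  have hr' : ∀ x i, r x i = algebraMap K (RatFunc K) (p x).1 * X ^ i + algebraMap K (RatFunc K)
      (p x).2 * (algebraMap K (RatFunc K) (algebraMap k K b) * X⁻¹) ^ (i + 1) := by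
    intro x i
    refine eq_of_mul_X_pow_mul_one_add_eq hJf hQFdec hβ hJ2 hσt ?_
    rw [← hr]
    conv_rhs => rw [hp x]
    simp only [map_add, map_mul, hφ'K, hφ'j]
  have hmem : ∀ x i i', aForm σ u (X ^ i) (r x i') ∈ laurentSpan K (i + i' + 1) := fun x i i' => by
    rw [hr']
    exact aForm_X_pow_mem_laurentSpan hσK hβ (ι.commutes b) hσt _ _ _ _ _
  have hK : ∀ x i i', laurentCoeff K (i + i' + 1 : ℕ) (aForm σ u (X ^ i) (r x i')) = 0 →
      ∃ y, x = φ y := by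
    intro x i i' h
    rw [hr', laurentCoeff_aForm_X_pow hσK hβ (ι.commutes b) hσt, neg_eq_zero, mul_eq_zero,
      map_eq_zero_iff _ ι.injective] at h
    exact ⟨(p x).1, (hp x).trans (by rw [h.resolve_left hu, map_zero, zero_mul, add_zero])⟩
  have hfixed := aForm_fixed hσ (u := u) (by rw [hσK, hιu, map_neg])
  obtain ⟨hbdeg, hbtop⟩ := laurentDegLE_of_eq_sum_sum hbtil fun i i' => hmem _ _ _
  obtain ⟨hqdeg, hqtop⟩ := laurentDegLE_of_eq_sum_add_sum_sum_ite hqtil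
    (fun i => hmem _ _ _) fun i i' => hmem _ _ _
  refine ⟨⟨hbdeg.isLaurent, ?_⟩, ⟨hqdeg.isLaurent, ?_⟩, hbdeg, hqdeg,
    fun h => hK _ d e (hbtop h), fun h => hK _ d d (hqtop h)⟩
  · simp only [hbtil, map_sum, hfixed]
  · simp only [hqtil, map_add, map_sum, apply_ite σ, map_zero, hfixed]

theorem degree_bounds_for_btilde_qtilde
    -- k is a field, K/k a degree-2 Galois extension with nontrivial automorphism ι,
    -- b a nonzero element of k
    (k K : Type) [Field k] [Field K] [Algebra k K]
    (hrank : Module.finrank k K = 2)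
    (ι : K ≃ₐ[k] K) (hι : ∃ x : K, ι x ≠ x)
    (hι2 : ∀ x : K, ι (ι x) = x)
    (hfix : ∀ x : K, ι x = x → ∃ c : k, algebraMap k K c = x)
    (b : k) (hb : b ≠ 0)
    -- Q = (K, ι, b) is the crossed-product quaternion k-algebra, a division ring,
    -- containing K via φ, with j·j = b, j·x = ι(x)·j, and Q = K ⊕ K·j
    (Q : Type) [DivisionRing Q] [Algebra k Q]
    (φ : K →ₐ[k] Q) (j : Q)
    (hj2 : j * j = algebraMap k Q b)
    (hjx : ∀ x : K, j * φ x = φ (ι x) * j)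
    (hQdec : ∀ q : Q, ∃! p : K × K, q = φ p.1 + φ p.2 * j)
    -- the canonical involution of Q
    (conj : Q → Q)
    (hconj_add : ∀ a b : Q, conj (a + b) = conj a + conj b)
    (hconj_mul : ∀ a b : Q, conj (a * b) = conj b * conj a)
    (hconj_K : ∀ x : K, conj (φ x) = φ (ι x))
    (hconj_j : conj j = -j)
    -- σ is the automorphism of K(t) acting as ι on K with σ(t) = b·t⁻¹
    (σ : RatFunc K ≃+* RatFunc K)
    (hσK : ∀ x : K, σ (algebraMap K (RatFunc K) x) = algebraMap K (RatFunc K) (ι x))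
    (hσt : σ RatFunc.X = algebraMap K (RatFunc K) (algebraMap k K b) * RatFunc.X⁻¹)
    -- Q_F = Q ⊗_k F, identified with K(t) ⊕ K(t)·j : it contains K(t) via ψ and an
    -- element J (the image of j) with J·J = b, J·ψ(f) = ψ(σ f)·J, Q_F = ψ(K(t)) ⊕ ψ(K(t))·J,
    -- and Q embeds via φ' compatibly with φ and j
    (QF : Type) [Ring QF]
    (ψ : RatFunc K →+* QF) (J : QF)
    (hJ2 : J * J = ψ (algebraMap K (RatFunc K) (algebraMap k K b)))
    (hJf : ∀ f : RatFunc K, J * ψ f = ψ (σ f) * J)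
    (hQFdec : ∀ q : QF, ∃! p : RatFunc K × RatFunc K, q = ψ p.1 + ψ p.2 * J)
    (φ' : Q →+* QF)
    (hφ'K : ∀ x : K, φ' (φ x) = ψ (algebraMap K (RatFunc K) x))
    (hφ'j : φ' j = J)
    -- u is a nonzero element of K with ι(u) = -u
    (u : K) (hu : u ≠ 0) (hιu : ι u = -u)
    -- V is a finitely generated right Q-module and s a sesquilinear form on V
    (V : Type) [AddCommGroup V] [Module Qᵐᵒᵖ V] [Module.Finite Qᵐᵒᵖ V]
    (s : V → V → Q)
    (hs1 : ∀ v v' w : V, s (v + v') w = s v w + s v' w)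
    (hs2 : ∀ v w w' : V, s v (w + w') = s v w + s v w')
    (hsesq : ∀ (v w : V) (x y : Q),
      s (MulOpposite.op x • v) (MulOpposite.op y • w) = conj x * s v w * y)
    -- r x i is the unique element of K(t) with x·tⁱ·ε = (r x i)·ε
    (r : Q → ℕ → RatFunc K)
    (hr : ∀ (x : Q) (i : ℕ),
      φ' x * (ψ (RatFunc.X ^ i) * (1 + J * ψ RatFunc.X⁻¹)) =
        ψ (r x i) * (1 + J * ψ RatFunc.X⁻¹))
    (d e : ℕ) (v : Fin (d + 1) → V) (w : Fin (e + 1) → V)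
    (btil qtil : RatFunc K)
    (hbtil : btil = ∑ i : Fin (d + 1), ∑ i' : Fin (e + 1),
      aForm σ u (RatFunc.X ^ (i : ℕ))
        (r (s (v i) (w i') - conj (s (w i') (v i))) (i' : ℕ)))
    (hqtil : qtil = (∑ i : Fin (d + 1), aForm σ u (RatFunc.X ^ (i : ℕ)) (r (s (v i) (v i)) (i : ℕ))) +
      ∑ i : Fin (d + 1), ∑ i' : Fin (d + 1),
        if (i : ℕ) < (i' : ℕ) then
          aForm σ u (RatFunc.X ^ (i : ℕ))
            (r (s (v i) (v i') - conj (s (v i') (v i))) (i' : ℕ))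
        else 0) :
    -- b̃ and q̃ lie in 𝓕 ...
    (IsLaurent btil ∧ σ btil = btil) ∧ (IsLaurent qtil ∧ σ qtil = qtil) ∧
    -- ... deg b̃ ≤ d+e+1 and deg q̃ ≤ 2d+1 ...
    LaurentDegLE btil (d + e + 1) ∧ LaurentDegLE qtil (2 * d + 1) ∧
    -- ... if deg b̃ < d+e+1 then h_s(v_d, w_e) ∈ K ...
    (LaurentDegLE btil (d + e) →
      ∃ y : K, s (v (Fin.last d)) (w (Fin.last e)) -
        conj (s (w (Fin.last e)) (v (Fin.last d))) = φ y) ∧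
    -- ... and if deg q̃ < 2d+1 then s(v_d, v_d) ∈ K
    (LaurentDegLE qtil (2 * d) → ∃ y : K, s (v (Fin.last d)) (v (Fin.last d)) = φ y) :=
  degree_bounds_for_btilde_qtilde_general k K ι hι2 b hb Q φ j hQdec conj σ hσK hσt QF ψ J hJ2 hJf
    hQFdec φ' hφ'K hφ'j u hu hιu V s r hr d e v w btil qtil hbtil hqtil
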